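/- Let n ≥ 2 and for x ∈ ℝⁿ let A(x) be the symmetric (n+1)×(n+1) arrow matrix with A(x)₀₀ = E₁(x), A(x)₀ᵢ = A(x)ᵢ₀ = xᵢ for 1 ≤ i ≤ n, A(x)ᵢᵢ = E₁(x) for 1 ≤ i ≤ n, and zeros elsewhere. Then for every x ∈ ℝⁿ the following are equivalent: (i) A(x) is positive semidefinite; (ii) E₁(x) ≥ 0 and E₂(x) ≥ 0; (iii) every real root t of the univariate polynomial t ↦ E₂(x + t𝟙) satisfies t ≤ 0. (Thus the hyperbolicity cone of E₂ with respect to 𝟙 is a spectrahedral cone.) -/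

import Mathlib

/-- The second elementary symmetric function of `x : Fin n → ℝ`. -/
noncomputable def esymm2 {n : ℕ} (x : Fin n → ℝ) : ℝ :=
  ∑ s ∈ Finset.powersetCard 2 (Finset.univ : Finset (Fin n)), ∏ i ∈ s, x i

/-- The symmetric `(n+1) × (n+1)` arrow matrix with `A(x)₀₀ = E₁(x)`,
`A(x)₀ᵢ = A(x)ᵢ₀ = xᵢ`, `A(x)ᵢᵢ = E₁(x)` for `1 ≤ i ≤ n` and zeros elsewhere. -/
noncomputable def arrow (n : ℕ) (x : Fin n → ℝ) : Matrix (Fin (n + 1)) (Fin (n + 1)) ℝ :=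
  Matrix.of fun i j =>
    if hi : i = 0 then (if hj : j = 0 then ∑ t, x t else x (j.pred hj))
    else if hj : j = 0 then x (i.pred hi)
    else if i = j then ∑ t, x t else 0

/-!
Write `e = E₁(x)` and `p = ∑ xᵢ²`; Newton's identity gives `2 E₂(x) = e² - p`. The quadratic
form of `A(x)` at `(a, z)` is `e (a² + ‖z‖²) + 2a ⟨x, z⟩`, which by Cauchy–Schwarz is nonnegative
for all `(a, z)` exactly when `e ≥ 0` and `p ≤ e²` (`A(x)` is the usual spectrahedral description
of the Lorentz cone `‖x‖ ≤ e`). On the other side, `E₂(x + t𝟙)` is a quadratic in `t` with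
leading coefficient `n(n-1)/2 > 0`, linear coefficient `(n-1) e` and discriminant
`(n-1)(n p - e²) ≥ 0`, so all its roots are `≤ 0` iff its two lower coefficients are `≥ 0`.
-/

open Finset Matrix

theorem two_mul_sum_powersetCard_two_prod {σ R : Type*} [Fintype σ] [DecidableEq σ]
    [CommRing R] (x : σ → R) :
    2 * ∑ s ∈ powersetCard 2 (univ : Finset σ), ∏ i ∈ s, x i = (∑ i, x i) ^ 2 - ∑ i, x i ^ 2 := by
  have newton : ∑ i, x i ^ 2
      = -(2 * ∑ s ∈ powersetCard 2 univ, ∏ i ∈ s, x i) + (∑ i, x i) * ∑ i, x i := by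
    simpa [MvPolynomial.psum, MvPolynomial.esymm, sum_filter, Nat.sum_antidiagonal_succ,
      powersetCard_one, Odd.neg_one_pow (by decide : Odd 3)] using
      congrArg (MvPolynomial.eval x) (MvPolynomial.psum_eq_mul_esymm_sub_sum σ R 2 two_pos)
  linear_combination newton

theorem two_mul_esymm2 {n : ℕ} (x : Fin n → ℝ) :
    2 * esymm2 x = (∑ i, x i) ^ 2 - ∑ i, x i ^ 2 :=
  two_mul_sum_powersetCard_two_prod x

theorem esymm2_add_const {n : ℕ} (x : Fin n → ℝ) (t : ℝ) :
    esymm2 (fun i => x i + t)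
      = n * (n - 1) / 2 * (t * t) + (n - 1) * (∑ i, x i) * t + esymm2 x := by
  have h := two_mul_esymm2 (fun i => x i + t)
  simp only [add_sq, sum_add_distrib, sum_const, card_univ, Fintype.card_fin, nsmul_eq_mul,
    ← sum_mul, ← mul_sum] at h
  linear_combination h / 2 - two_mul_esymm2 x / 2

theorem discrim_esymm2_add_const_nonneg {n : ℕ} (hn : 1 ≤ n) (x : Fin n → ℝ) :
    0 ≤ discrim (n * (n - 1) / 2 : ℝ) ((n - 1) * ∑ i, x i) (esymm2 x) := by
  have hcs : (∑ i, x i) ^ 2 ≤ n * ∑ i, x i ^ 2 := by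
    simpa using sq_sum_le_card_mul_sum_sq (s := univ) (f := x)
  have hn' : (0 : ℝ) ≤ n - 1 := by rw [sub_nonneg]; exact_mod_cast hn
  have h : discrim (n * (n - 1) / 2 : ℝ) ((n - 1) * ∑ i, x i) (esymm2 x)
      = (n - 1) * (n * ∑ i, x i ^ 2 - (∑ i, x i) ^ 2) := by
    rw [discrim]; linear_combination (-(n:ℝ) * (n - 1)) * two_mul_esymm2 x
  rw [h]; exact mul_nonneg hn' (sub_nonneg.2 hcs)

theorem quadratic_roots_nonpos_iff {a b c : ℝ} (ha : 0 < a) (hd : 0 ≤ discrim a b c) :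
    (∀ t, a * (t * t) + b * t + c = 0 → t ≤ 0) ↔ 0 ≤ b ∧ 0 ≤ c := by
  constructor
  · intro h
    set s := √(discrim a b c)
    have hs : discrim a b c = s * s := (Real.mul_self_sqrt hd).symm
    have hroot := h _ ((quadratic_eq_zero_iff ha.ne' hs _).2 (Or.inl rfl))
    have hsb : s ≤ b := by
      rcases div_nonpos_iff.1 hroot with ⟨_, hden⟩ | ⟨hnum, _⟩ <;> linarith
    have hb : 0 ≤ b := (Real.sqrt_nonneg _).trans hsb
    refine ⟨hb, ?_⟩
    have : s * s ≤ b * b := mul_self_le_mul_self (Real.sqrt_nonneg _) hsb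
    rw [← hs, discrim] at this
    nlinarith
  · rintro ⟨hb, hc⟩ t ht
    by_contra! htpos
    nlinarith [mul_pos (mul_pos ha htpos) htpos, mul_nonneg hb htpos.le]

theorem arrow_isHermitian {n : ℕ} (x : Fin n → ℝ) : (arrow n x).IsHermitian := by
  ext i j
  rcases eq_or_ne i 0 with hi | hi <;> rcases eq_or_ne j 0 with hj | hj <;>
    simp [arrow, hi, hj, eq_comm]

theorem cons_dotProduct_arrow_mulVec_cons {n : ℕ} (x : Fin n → ℝ) (a : ℝ) (z : Fin n → ℝ) :
    Fin.cons a z ⬝ᵥ arrow n x *ᵥ Fin.cons a z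
      = (∑ i, x i) * (a ^ 2 + ∑ i, z i ^ 2) + 2 * a * ∑ i, x i * z i := by
  simp only [dotProduct, mulVec, arrow, of_apply, Fin.sum_univ_succ, Fin.cons_zero,
    Fin.cons_succ, Fin.succ_ne_zero, Fin.pred_succ, Fin.succ_inj, dite_true, dite_false, ite_mul,
    zero_mul, sum_ite_eq, mem_univ, if_true]
  have hsum : ∑ i, z i * (x i * a + (∑ j, x j) * z i)
      = a * ∑ i, x i * z i + (∑ j, x j) * ∑ i, z i ^ 2 := by
    rw [mul_sum, mul_sum, ← sum_add_distrib]
    exact sum_congr rfl fun i _ => by ring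
  rw [hsum]
  ring

theorem arrow_posSemidef_iff {n : ℕ} (x : Fin n → ℝ) :
    (arrow n x).PosSemidef ↔ 0 ≤ ∑ i, x i ∧ ∑ i, x i ^ 2 ≤ (∑ i, x i) ^ 2 := by
  have hform : (arrow n x).PosSemidef ↔ ∀ (a : ℝ) (z : Fin n → ℝ),
      0 ≤ (∑ i, x i) * (a ^ 2 + ∑ i, z i ^ 2) + 2 * a * ∑ i, x i * z i := by
    simp only [posSemidef_iff_dotProduct_mulVec, arrow_isHermitian, true_and, star_trivial,
      ← cons_dotProduct_arrow_mulVec_cons]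
    exact ⟨fun h a z => h _, fun h y => Fin.cons_self_tail y ▸ h _ _⟩
  rw [hform]
  set e := ∑ i, x i
  constructor
  · intro h
    have he : 0 ≤ e := by simpa using h 1 0
    -- at `(t, x)` the form is `e t² + 2 p t + e p`, so its discriminant `4 p (p - e²)` is `≤ 0`
    have hd := discrim_le_zero (a := e) (b := 2 * ∑ i, x i ^ 2) (c := e * ∑ i, x i ^ 2)
      fun t => by have := h t x; simp only [← sq] at this ⊢; linarith
    rw [discrim] at hd
    exact ⟨he, by nlinarith [sq_nonneg e]⟩
  · rintro ⟨he, hxe⟩ a z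
    have hcs : (∑ i, x i * z i) ^ 2 ≤ e ^ 2 * ∑ i, z i ^ 2 :=
      (sum_mul_sq_le_sq_mul_sq univ x z).trans
        (mul_le_mul_of_nonneg_right hxe (sum_nonneg fun i _ => sq_nonneg _))
    rcases he.eq_or_lt with he0 | hpos
    · have : ∑ i, x i * z i = 0 := by rw [← he0] at hcs; nlinarith
      simp [← he0, this]
    · -- `e · form = (e a + ⟨x, z⟩)² + (e² ‖z‖² - ⟨x, z⟩²)`
      nlinarith [sq_nonneg (e * a + ∑ i, x i * z i)]

theorem stmt14 {n : ℕ} (hn : 2 ≤ n) (x : Fin n → ℝ) :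
    ((arrow n x).PosSemidef ↔ (0 ≤ ∑ i, x i ∧ 0 ≤ esymm2 x)) ∧
    ((0 ≤ ∑ i, x i ∧ 0 ≤ esymm2 x) ↔
      ∀ t : ℝ, esymm2 (fun i => x i + t) = 0 → t ≤ 0) := by
  have hesymm2 : 0 ≤ esymm2 x ↔ ∑ i, x i ^ 2 ≤ (∑ i, x i) ^ 2 := by
    rw [← sub_nonneg (b := ∑ i, x i ^ 2), ← two_mul_esymm2,
      mul_nonneg_iff_of_pos_left two_pos]
  refine ⟨by rw [arrow_posSemidef_iff, hesymm2], ?_⟩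
  have hn1 : (0 : ℝ) < n - 1 := by
    rw [sub_pos]; exact_mod_cast hn
  have ha : (0 : ℝ) < n * (n - 1) / 2 := by positivity
  simp_rw [esymm2_add_const]
  rw [quadratic_roots_nonpos_iff ha (discrim_esymm2_add_const_nonneg (by omega) x),
    mul_nonneg_iff_of_pos_left hn1]
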